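/- arXiv:1408.2280 — 5 statements merged into one kernel-verified Lean document; each statement's English description precedes it below -/
import Mathlib

section
/- Let m, n ≥ 0, let λ ∈ Λ_{n+1} with λ ⊂ m^{n+1}, let μ ∈ Λ_n with μ ⊂ m^n, and let r be an integer with 0 ≤ r ≤ m. Set d = #{1 ≤ j ≤ m : λ′_j = μ′_j + 1}, where λ′, μ′ ∈ Λ_m are the conjugate partitions. Then (n^m − μ′) ∼_r ((n+1)^m − λ′) holds in Λ_m if and only if μ ⪯ λ (with μ regarded as an element of Λ_{n+1}) and m − d ≤ r. -/
/-!
Since `λ` and `μ` fit in `m` columns they are determined by their conjugates, and conjugation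
turns the interlacing `μ_k ≤ λ_k`, `λ_{k+2} ≤ μ_k` that characterises `μ ⪯ λ` into the columnwise
bounds `μ'_i ≤ λ'_i ≤ μ'_i + 2`. On the other side, two partitions satisfy `a ∼_r b` iff
`|a_j - b_j| ≤ 1` for all `j` and `a_j ≠ b_j` for at most `r` indices (take `ν = min a b`).
For `a = n^m − μ'` and `b = (n+1)^m − λ'` one has `a_j - b_j = λ'_i - μ'_i - 1` at the reversed
index `i`, so the two conditions match, and `a_j = b_j` exactly at the `d` columns where
`λ'_i = μ'_i + 1`.
-/

open Finset

/-- `l` is a partition with at most `N` parts: `l 1 ≥ l 2 ≥ ⋯ ≥ l N (≥ 0)`. -/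
def IsPartition {N : ℕ} (l : Fin N → ℕ) : Prop :=
  ∀ i j : Fin N, i ≤ j → l j ≤ l i

/-- Containment of diagrams: `μ ⊂ l`. -/
def SubDiag {N : ℕ} (μ l : Fin N → ℕ) : Prop := ∀ j, μ j ≤ l j

/-- The weight `|l| = l 1 + ⋯ + l N`. -/
def wt {N : ℕ} (l : Fin N → ℕ) : ℕ := ∑ j, l j

/-- The skew diagram `l/μ` is a vertical strip: `μ j ≤ l j ≤ μ j + 1` for all `j`. -/
def VStrip {N : ℕ} (l μ : Fin N → ℕ) : Prop :=
  ∀ j, μ j ≤ l j ∧ l j ≤ μ j + 1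

/-- The skew diagram `l/μ` is a horizontal strip:
`l 1 ≥ μ 1 ≥ l 2 ≥ μ 2 ≥ ⋯ ≥ l N ≥ μ N` (interlacing). -/
def HStrip {N : ℕ} (l μ : Fin N → ℕ) : Prop :=
  (∀ j, μ j ≤ l j) ∧ ∀ (j : ℕ) (h : j + 1 < N), l ⟨j + 1, h⟩ ≤ μ ⟨j, by omega⟩

/-- `|l/μ| = |l| - |μ|` (for `μ ⊂ l`). -/
def skewWt {N : ℕ} (l μ : Fin N → ℕ) : ℕ := ∑ j, (l j - μ j)

/-- The proximity relation `μ ∼_r l`: there is a partition `ν ⊂ l, ν ⊂ μ` such that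
`l/ν` and `μ/ν` are vertical strips with `|l/ν| + |μ/ν| ≤ r`. -/
def simRel {N : ℕ} (r : ℕ) (μ l : Fin N → ℕ) : Prop :=
  ∃ ν : Fin N → ℕ, IsPartition ν ∧ SubDiag ν l ∧ SubDiag ν μ ∧
    VStrip l ν ∧ VStrip μ ν ∧ skewWt l ν + skewWt μ ν ≤ r

/-- `μ ⪯ l`: there is a partition `ν` with `μ ⊂ ν ⊂ l` such that `l/ν` and `ν/μ`
are horizontal strips. -/
def preceq {N : ℕ} (μ l : Fin N → ℕ) : Prop :=
  ∃ ν : Fin N → ℕ, IsPartition ν ∧ SubDiag μ ν ∧ SubDiag ν l ∧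
    HStrip l ν ∧ HStrip ν μ

/-- The conjugate partition `l′ ∈ Λ_m` (for `l ∈ Λ_N` with `l 1 ≤ m`):
`l′ i = #{j : l j ≥ i}` (here `i : Fin m` is 0-based, so `i+1`-th row). -/
def conjP {N : ℕ} (m : ℕ) (l : Fin N → ℕ) : Fin m → ℕ :=
  fun i => (Finset.univ.filter (fun j : Fin N => (i : ℕ) + 1 ≤ l j)).card

/-- The rectangular partition `m^N ∈ Λ_N`. -/
def rectP (m N : ℕ) : Fin N → ℕ := fun _ => m

/-- The complement `m^N − l` of `l ⊂ m^N` in `Λ_N`: `(m^N − l) j = m − l (N+1−j)`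
(1-based), i.e. `m - l j.rev` (0-based). -/
def complP {N : ℕ} (m : ℕ) (l : Fin N → ℕ) : Fin N → ℕ :=
  fun j => m - l j.rev

/-- The natural embedding `Λ_N ↪ Λ_{N+1}` by appending a zero part. -/
def extendP {N : ℕ} (l : Fin N → ℕ) : Fin (N + 1) → ℕ := Fin.snoc l 0

theorem Fin.lt_card_iff_mem_of_isLowerSet {N : ℕ} {S : Finset (Fin N)}
    (hS : IsLowerSet (S : Set (Fin N))) (k : Fin N) : (k : ℕ) < #S ↔ k ∈ S := by
  constructor
  · intro hk
    by_contra hkS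
    have hsub : S ⊆ Iio k := fun j hj => mem_Iio.2 <| lt_of_not_ge fun hkj => hkS (hS hkj hj)
    have := card_le_card hsub
    rw [Fin.card_Iio] at this
    omega
  · intro hk
    have hsub : Iic k ⊆ S := fun j hj => hS (mem_Iic.1 hj) hk
    have := card_le_card hsub
    rw [Fin.card_Iic] at this
    omega

section Conjugate

variable {N m : ℕ}

theorem IsPartition.lt_conjP_iff {l : Fin N → ℕ} (hl : IsPartition l) (i : Fin m) (k : Fin N) :
    (k : ℕ) < conjP m l i ↔ (i : ℕ) + 1 ≤ l k := by
  refine (Fin.lt_card_iff_mem_of_isLowerSet (fun a b hba ha => ?_) k).trans (by simp)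
  simp only [coe_filter, mem_univ, true_and, Set.mem_ofPred_eq] at ha ⊢
  exact ha.trans (hl b a hba)

theorem conjP_le (l : Fin N → ℕ) (i : Fin m) : conjP m l i ≤ N :=
  (card_le_univ _).trans_eq (Fintype.card_fin N)

theorem isPartition_conjP (l : Fin N → ℕ) : IsPartition (conjP m l) := by
  intro i j hij
  refine card_le_card fun k hk => ?_
  simp only [mem_filter, mem_univ, true_and] at hk ⊢
  exact le_trans (by simpa using hij) hk

theorem forall_le_of_add_le_iff_conjP_le {p q : Fin N → ℕ} (hp : IsPartition p)
    (hq : IsPartition q) (hpm : ∀ k, p k ≤ m) (s : ℕ) :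
    (∀ j k : Fin N, (j : ℕ) + s ≤ k → p k ≤ q j) ↔
      ∀ i : Fin m, conjP m p i ≤ conjP m q i + s := by
  constructor
  · intro h i
    by_contra! hlt
    have hk : conjP m q i + s < N := hlt.trans_le (conjP_le p i)
    have hj : conjP m q i < N := by omega
    have hpk := (hp.lt_conjP_iff i ⟨_, hk⟩).1 hlt
    have hqj := (hq.lt_conjP_iff i ⟨_, hj⟩).2 (hpk.trans (h ⟨_, hj⟩ ⟨_, hk⟩ le_rfl))
    exact lt_irrefl _ hqj
  · intro h j k hjk
    obtain hzero | hpos := Nat.eq_zero_or_pos (p k)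
    · omega
    · have hi : p k - 1 < m := by have := hpm k; omega
      have hk := (hp.lt_conjP_iff ⟨_, hi⟩ k).2 (by simp; omega)
      have hj := (hq.lt_conjP_iff ⟨_, hi⟩ j).1 (by have := h ⟨_, hi⟩; omega)
      simp at hj
      omega

theorem IsPartition.forall_le_iff_conjP_le {p q : Fin N → ℕ} (hp : IsPartition p)
    (hq : IsPartition q) (hpm : ∀ k, p k ≤ m) :
    (∀ k, p k ≤ q k) ↔ ∀ i : Fin m, conjP m p i ≤ conjP m q i := by
  have h0 := forall_le_of_add_le_iff_conjP_le hp hq hpm 0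
  simp only [add_zero, Fin.val_fin_le] at h0
  rw [← h0]
  exact ⟨fun h j k hjk => (h k).trans (hq j k hjk), fun h k => h k k le_rfl⟩

theorem IsPartition.extendP {l : Fin N → ℕ} (hl : IsPartition l) : IsPartition (extendP l) := by
  intro i j hij
  induction j using Fin.lastCases with
  | last => simp [_root_.extendP]
  | cast j =>
    induction i using Fin.lastCases with
    | last => exact absurd hij (by simp)
    | cast i => simpa [_root_.extendP] using hl i j (by simpa using hij)

theorem extendP_le {l : Fin N → ℕ} (hl : ∀ k, l k ≤ m) (k : Fin (N + 1)) : extendP l k ≤ m := by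
  induction k using Fin.lastCases with
  | last => simp [extendP]
  | cast k => simpa [extendP] using hl k

theorem conjP_extendP (l : Fin N → ℕ) : conjP m (extendP l) = conjP m l := by
  ext i
  refine (card_bij (fun k _ => Fin.castSucc k) ?_ ?_ ?_).symm
  · intro k hk
    simpa [extendP] using hk
  · exact fun _ _ _ _ h => Fin.castSucc_injective _ h
  · intro j hj
    induction j using Fin.lastCases with
    | last => simp [extendP] at hj
    | cast k => exact ⟨k, by simpa [extendP] using hj, rfl⟩

end Conjugate

theorem preceq_iff_interlace {N : ℕ} {μ l : Fin N → ℕ} (hl : IsPartition l) (hμ : IsPartition μ) :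
    preceq μ l ↔ (∀ k, μ k ≤ l k) ∧ ∀ j k : Fin N, (j : ℕ) + 2 ≤ k → l k ≤ μ j := by
  constructor
  · rintro ⟨ν, -, hμν, hνl, ⟨-, hlν⟩, ⟨-, hνμ⟩⟩
    refine ⟨fun k => (hμν k).trans (hνl k), fun j k hjk => ?_⟩
    calc l k ≤ l ⟨j + 2, by omega⟩ := hl _ _ (by simpa [Fin.le_def] using hjk)
      _ ≤ ν ⟨j + 1, by omega⟩ := hlν _ _
      _ ≤ μ j := hνμ _ _
  · rintro ⟨hsub, hgap⟩
    -- the smallest admissible middle partition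
    refine ⟨fun j => if h : (j : ℕ) + 1 < N then max (μ j) (l ⟨j + 1, h⟩) else μ j,
      fun i j hij => ?_, fun j => ?_, fun j => ?_, ⟨fun j => ?_, fun j hj => ?_⟩,
      ⟨fun j => ?_, fun j hj => ?_⟩⟩ <;> dsimp only
    · have hij' : (i : ℕ) ≤ j := hij
      split_ifs with hj hi hi
      · exact max_le_max (hμ i j hij) (hl ⟨i + 1, hi⟩ ⟨j + 1, hj⟩ (Fin.mk_le_mk.2 (by omega)))
      · omega
      · exact le_max_of_le_left (hμ i j hij)
      · exact hμ i j hij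
    · split_ifs
      exacts [le_max_left _ _, le_rfl]
    · split_ifs
      exacts [max_le (hsub j) (hl _ _ (by simp [Fin.le_def])), hsub j]
    · split_ifs
      exacts [max_le (hsub j) (hl _ _ (by simp [Fin.le_def])), hsub j]
    · simp only [dif_pos hj]
      exact le_max_right _ _
    · split_ifs
      exacts [le_max_left _ _, le_rfl]
    · split_ifs with h
      · exact max_le (hμ _ _ (by simp [Fin.le_def])) (hgap _ _ (by simp))
      · exact hμ _ _ (by simp [Fin.le_def])

theorem preceq_iff_conjP {N m : ℕ} {μ l : Fin N → ℕ} (hl : IsPartition l) (hμ : IsPartition μ)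
    (hlm : ∀ k, l k ≤ m) (hμm : ∀ k, μ k ≤ m) :
    preceq μ l ↔ ∀ i : Fin m, conjP m μ i ≤ conjP m l i ∧ conjP m l i ≤ conjP m μ i + 2 := by
  rw [preceq_iff_interlace hl hμ, hμ.forall_le_iff_conjP_le hl hμm,
    forall_le_of_add_le_iff_conjP_le hl hμ hlm 2, forall_and]

theorem simRel_iff {M : ℕ} {a b : Fin M → ℕ} (ha : IsPartition a) (hb : IsPartition b) (r : ℕ) :
    simRel r a b ↔ (∀ j, a j ≤ b j + 1 ∧ b j ≤ a j + 1) ∧ #{j | a j ≠ b j} ≤ r := by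
  constructor
  · rintro ⟨ν, -, -, -, hbν, haν, hwt⟩
    refine ⟨fun j => by have := hbν j; have := haν j; omega, le_trans ?_ hwt⟩
    rw [card_filter, skewWt, skewWt, ← sum_add_distrib]
    refine sum_le_sum fun j _ => ?_
    have := hbν j
    have := haν j
    split_ifs <;> omega
  · rintro ⟨hclose, hcard⟩
    refine ⟨fun j => min (a j) (b j), fun i j hij => min_le_min (ha i j hij) (hb i j hij),
      fun j => min_le_right _ _, fun j => min_le_left _ _, fun j => ?_, fun j => ?_,
      le_trans ?_ hcard⟩
    · have := hclose j; dsimp only; omega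
    · have := hclose j; dsimp only; omega
    rw [card_filter, skewWt, skewWt, ← sum_add_distrib]
    refine sum_le_sum fun j _ => ?_
    have := hclose j
    split_ifs <;> omega

theorem IsPartition.complP {N : ℕ} {l : Fin N → ℕ} (hl : IsPartition l) (m : ℕ) :
    IsPartition (complP m l) :=
  fun _ _ hij => Nat.sub_le_sub_left (hl _ _ (Fin.rev_le_rev.2 hij)) m

section Complement

variable {M n : ℕ} {p q : Fin M → ℕ}

theorem forall_complP_close_iff (hp : ∀ i, p i ≤ n) (hq : ∀ i, q i ≤ n + 1) :
    (∀ j, complP n p j ≤ complP (n + 1) q j + 1 ∧ complP (n + 1) q j ≤ complP n p j + 1) ↔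
      ∀ i, p i ≤ q i ∧ q i ≤ p i + 2 := by
  simp only [complP]
  refine ⟨fun h i => ?_, fun h j => ?_⟩
  · have := h i.rev
    rw [Fin.rev_rev] at this
    have := hp i; have := hq i; omega
  · have := h j.rev; have := hp j.rev; have := hq j.rev; omega

theorem card_complP_ne (hp : ∀ i, p i ≤ n) (hq : ∀ i, q i ≤ n + 1) :
    #{j | complP n p j ≠ complP (n + 1) q j} = M - #{i | q i = p i + 1} := by
  have hrev : #{j | complP n p j ≠ complP (n + 1) q j} = #{i | ¬ q i = p i + 1} := by
    rw [card_filter, card_filter]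
    refine Fintype.sum_equiv Fin.revPerm _ _ fun j => ?_
    have := hp j.rev; have := hq j.rev
    simp only [complP, Fin.revPerm_apply, ne_eq]
    congr 1
    apply propext
    omega
  have := card_filter_add_card_filter_not (s := univ) (fun i => q i = p i + 1)
  rw [card_univ, Fintype.card_fin] at this
  omega

end Complement

theorem statement0_general (m n : ℕ) (lam : Fin (n + 1) → ℕ) (hlam : IsPartition lam)
    (hlamb : SubDiag lam (rectP m (n + 1)))
    (mu : Fin n → ℕ) (hmu : IsPartition mu) (hmub : SubDiag mu (rectP m n))
    (r : ℕ) :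
    simRel r (complP n (conjP m mu)) (complP (n + 1) (conjP m lam)) ↔
      (preceq (extendP mu) lam ∧
        m - (Finset.univ.filter
          (fun j : Fin m => conjP m lam j = conjP m mu j + 1)).card ≤ r) := by
  have hmu' : ∀ i : Fin m, conjP m mu i ≤ n := conjP_le mu
  have hlam' : ∀ i : Fin m, conjP m lam i ≤ n + 1 := conjP_le lam
  rw [simRel_iff ((isPartition_conjP mu).complP n) ((isPartition_conjP lam).complP (n + 1)),
    forall_complP_close_iff hmu' hlam', card_complP_ne hmu' hlam',
    preceq_iff_conjP hlam hmu.extendP hlamb (extendP_le hmub), conjP_extendP]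

/-- For `λ ∈ Λ_{n+1}` with `λ ⊂ m^{n+1}`, `μ ∈ Λ_n` with `μ ⊂ m^n`, and
`0 ≤ r ≤ m`, with `d = #{1 ≤ j ≤ m : λ′_j = μ′_j + 1}`, one has
`(n^m − μ′) ∼_r ((n+1)^m − λ′)` in `Λ_m` iff `μ ⪯ λ` (in `Λ_{n+1}`) and `m − d ≤ r`. -/
theorem statement0 (m n : ℕ) (lam : Fin (n + 1) → ℕ) (hlam : IsPartition lam)
    (hlamb : SubDiag lam (rectP m (n + 1)))
    (mu : Fin n → ℕ) (hmu : IsPartition mu) (hmub : SubDiag mu (rectP m n))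
    (r : ℕ) (hr : r ≤ m) :
    simRel r (complP n (conjP m mu)) (complP (n + 1) (conjP m lam)) ↔
      (preceq (extendP mu) lam ∧
        m - (Finset.univ.filter
          (fun j : Fin m => conjP m lam j = conjP m mu j + 1)).card ≤ r) :=
  statement0_general m n lam hlam hlamb mu hmu hmub r
end

section
/- Let λ, μ ∈ Λ_N and let r ≥ 0 be an integer. Then μ ∼_r λ if and only if |λ_j − μ_j| ≤ 1 for every 1 ≤ j ≤ N and Σ_{j=1}^{N} |λ_j − μ_j| ≤ r. -/
/-! Any common subdiagram `ν` of `λ` and `μ` has `|λ_j - μ_j| ≤ (λ_j - ν_j) + (μ_j - ν_j)`, with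
equality for the meet `ν = λ ⊓ μ`, which is again a partition; so `λ ⊓ μ` is the optimal witness. -/

open Finset

theorem IsPartition.inf {N : ℕ} {l μ : Fin N → ℕ} (hl : IsPartition l) (hμ : IsPartition μ) :
    IsPartition (l ⊓ μ) :=
  fun i j hij => inf_le_inf (hl i j hij) (hμ i j hij)

theorem abs_sub_le_tsub_add_tsub {a b n : ℕ} (ha : n ≤ a) (hb : n ≤ b) :
    |(a : ℤ) - b| ≤ ((a - n : ℕ) : ℤ) + ((b - n : ℕ) : ℤ) := by
  rw [abs_le]; omega

theorem abs_sub_eq_tsub_min_add_tsub_min (a b : ℕ) :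
    |(a : ℤ) - b| = ((a - min a b : ℕ) : ℤ) + ((b - min a b : ℕ) : ℤ) := by
  rcases abs_cases ((a : ℤ) - b) with ⟨h, _⟩ | ⟨h, _⟩ <;> omega

theorem sum_abs_sub_le_skewWt_add_skewWt {N : ℕ} {l μ ν : Fin N → ℕ}
    (hνl : SubDiag ν l) (hνμ : SubDiag ν μ) :
    ∑ j, |(l j : ℤ) - μ j| ≤ ((skewWt l ν + skewWt μ ν : ℕ) : ℤ) := by
  simp only [skewWt, Nat.cast_add, Nat.cast_sum, ← sum_add_distrib]
  exact sum_le_sum fun j _ => abs_sub_le_tsub_add_tsub (hνl j) (hνμ j)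

theorem skewWt_inf_add_skewWt_inf {N : ℕ} (l μ : Fin N → ℕ) :
    ((skewWt l (l ⊓ μ) + skewWt μ (l ⊓ μ) : ℕ) : ℤ) = ∑ j, |(l j : ℤ) - μ j| := by
  simp only [skewWt, Nat.cast_add, Nat.cast_sum, ← sum_add_distrib, Pi.inf_apply]
  exact sum_congr rfl fun j _ => (abs_sub_eq_tsub_min_add_tsub_min (l j) (μ j)).symm

theorem abs_sub_le_one_of_vStrip {N : ℕ} {l μ ν : Fin N → ℕ}
    (hl : VStrip l ν) (hμ : VStrip μ ν) (j : Fin N) : |(l j : ℤ) - μ j| ≤ 1 := by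
  have := hl j; have := hμ j
  rw [abs_le]; omega

theorem vStrip_inf_of_abs_sub_le_one {N : ℕ} {l μ : Fin N → ℕ}
    (h : ∀ j, |(l j : ℤ) - μ j| ≤ 1) : VStrip l (l ⊓ μ) := fun j => by
  have := abs_le.mp (h j)
  simp only [Pi.inf_apply]
  omega

/-- For partitions `λ, μ ∈ Λ_N` and an integer `r ≥ 0`, `μ ∼_r λ` iff
`|λ_j − μ_j| ≤ 1` for every `j` and `Σ_j |λ_j − μ_j| ≤ r`. -/
theorem statement3 {N : ℕ} (lam mu : Fin N → ℕ) (hlam : IsPartition lam)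
    (hmu : IsPartition mu) (r : ℕ) :
    simRel r mu lam ↔
      ((∀ j, |(lam j : ℤ) - (mu j : ℤ)| ≤ 1) ∧
        ∑ j, |(lam j : ℤ) - (mu j : ℤ)| ≤ (r : ℤ)) := by
  constructor
  · rintro ⟨ν, -, hνl, hνm, hVl, hVm, hr⟩
    exact ⟨abs_sub_le_one_of_vStrip hVl hVm,
      (sum_abs_sub_le_skewWt_add_skewWt hνl hνm).trans (by exact_mod_cast hr)⟩
  · rintro ⟨hclose, hr⟩
    have hclose' : ∀ j, |(mu j : ℤ) - lam j| ≤ 1 :=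
      fun j => abs_sub_comm (lam j : ℤ) _ ▸ hclose j
    refine ⟨lam ⊓ mu, hlam.inf hmu, fun j => inf_le_left, fun j => inf_le_right,
      vStrip_inf_of_abs_sub_le_one hclose, ?_, ?_⟩
    · rw [inf_comm]; exact vStrip_inf_of_abs_sub_le_one hclose'
    · exact_mod_cast (skewWt_inf_add_skewWt_inf lam mu).trans_le hr
end

section
/- Let μ, λ ∈ Λ_N. Then μ ⪯ λ if and only if μ ⊂ λ and λ_{j+2} ≤ μ_j for all 1 ≤ j ≤ N−2. -/
/-
A horizontal strip `l/ν` is exactly `ν ≤ l` together with `shiftP l ≤ ν`, where `shiftP`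
drops the first part and appends a zero. Hence `μ ⪯ λ` forces `shiftP (shiftP λ) ≤ μ`,
which is the condition `λ_{j+2} ≤ μ_j`. Conversely, under that condition
`ν = μ ⊔ shiftP λ` (that is, `ν_j = max μ_j λ_{j+1}`) is an intermediate partition with
both `λ/ν` and `ν/μ` horizontal strips.
-/

open Finset

def shiftP {N : ℕ} (l : Fin N → ℕ) : Fin N → ℕ :=
  fun j => if h : (j : ℕ) + 1 < N then l ⟨j + 1, h⟩ else 0

section

variable {N : ℕ}

lemma shiftP_mono {a b : Fin N → ℕ} (h : a ≤ b) : shiftP a ≤ shiftP b := by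
  intro j
  unfold shiftP
  split_ifs
  · exact h _
  · exact le_rfl

lemma shiftP_sup (a b : Fin N → ℕ) : shiftP (a ⊔ b) = shiftP a ⊔ shiftP b := by
  ext j
  simp only [shiftP, Pi.sup_apply]
  split_ifs <;> simp

lemma IsPartition.sup {a b : Fin N → ℕ} (ha : IsPartition a) (hb : IsPartition b) :
    IsPartition (a ⊔ b) :=
  fun i j h => sup_le_sup (ha i j h) (hb i j h)

lemma IsPartition.shiftP_le {l : Fin N → ℕ} (hl : IsPartition l) : shiftP l ≤ l := by
  intro j
  unfold shiftP
  split_ifs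
  · exact hl _ _ (Fin.mk_le_mk.mpr (Nat.le_succ _))
  · exact Nat.zero_le _

lemma IsPartition.shiftP {l : Fin N → ℕ} (hl : IsPartition l) : IsPartition (shiftP l) := by
  intro i j hij
  have hij' : (i : ℕ) ≤ j := hij
  unfold _root_.shiftP
  split_ifs with hj hi hi
  · exact hl _ _ (Fin.mk_le_mk.mpr (by omega))
  · omega
  · exact Nat.zero_le _
  · exact le_rfl

lemma hStrip_iff {l μ : Fin N → ℕ} : HStrip l μ ↔ μ ≤ l ∧ shiftP l ≤ μ := by
  refine and_congr Iff.rfl ⟨fun h j => ?_, fun h j hj => ?_⟩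
  · unfold shiftP
    split_ifs with hj
    · exact h j hj
    · exact Nat.zero_le _
  · simpa [shiftP, hj] using h ⟨j, by omega⟩

lemma shiftP_shiftP_le_iff {l μ : Fin N → ℕ} :
    shiftP (shiftP l) ≤ μ ↔
      ∀ (j : ℕ) (h : j + 2 < N), l ⟨j + 2, h⟩ ≤ μ ⟨j, Nat.lt_of_add_right_lt h⟩ := by
  refine ⟨fun h j hj => ?_, fun h j => ?_⟩
  · simpa [shiftP, hj, show j + 1 < N by omega] using h ⟨j, by omega⟩
  · unfold shiftP
    split_ifs with hj₁ hj₂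
    · exact h j hj₂
    · exact Nat.zero_le _
    · exact Nat.zero_le _

end

/-- For partitions `μ, λ ∈ Λ_N`, `μ ⪯ λ` iff `μ ⊂ λ` and
`λ_{j+2} ≤ μ_j` for all `1 ≤ j ≤ N − 2`. -/
theorem statement5 {N : ℕ} (mu lam : Fin N → ℕ) (hmu : IsPartition mu)
    (hlam : IsPartition lam) :
    preceq mu lam ↔
      (SubDiag mu lam ∧
        ∀ (j : ℕ) (h : j + 2 < N), lam ⟨j + 2, h⟩ ≤ mu ⟨j, by omega⟩) := by
  rw [← shiftP_shiftP_le_iff]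
  constructor
  · rintro ⟨ν, -, hμν, hνl, hlν, hνμ⟩
    rw [hStrip_iff] at hlν hνμ
    exact ⟨fun j => (hμν j).trans (hνl j), (shiftP_mono hlν.2).trans hνμ.2⟩
  · rintro ⟨hsub, hjump⟩
    have hμν : mu ≤ mu ⊔ shiftP lam := le_sup_left
    have hνl : mu ⊔ shiftP lam ≤ lam := sup_le hsub hlam.shiftP_le
    refine ⟨mu ⊔ shiftP lam, hmu.sup hlam.shiftP, hμν, hνl,
      hStrip_iff.2 ⟨hνl, le_sup_right⟩, hStrip_iff.2 ⟨hμν, ?_⟩⟩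
    rw [shiftP_sup]
    exact sup_le hmu.shiftP_le hjump
end

section
/- Let K be a field, let m ≥ 0, and let x_1, …, x_m, z, t, t_0 be nonzero elements of K such that all elements t^{i} t_0 (0 ≤ i ≤ m−1) are nonzero. Then the column-row Cauchy identity holds: ∏_{i=1}^{m} ⟨x_i; z⟩ = Σ_{r=0}^{m} (−1)^{m−r} E_r(x_1,…,x_m; t, t_0) · ⟨z; t_0⟩_{t, m−r}. -/
open Finset

/-- `⟨z;x⟩ := z + z⁻¹ − x − x⁻¹`. -/
def bkt {K : Type*} [Field K] (z x : K) : K := z + z⁻¹ - x - x⁻¹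

/-- The one-column hyperoctahedral interpolation polynomial
`E_r(z_1,…,z_n;t,t_0) := Σ_{1≤j_1<⋯<j_r≤n} ∏_{k=1}^r ⟨z_{j_k}; t^{j_k−k} t_0⟩`
(with `E_0 := 1`); the sum is over `r`-element subsets `S` of indices, listed in
increasing order `j_1 < ⋯ < j_r` via `S.orderIsoOfFin`. -/
def Epoly {K : Type*} [Field K] {n : ℕ} (r : ℕ) (z : Fin n → K) (t t0 : K) : K :=
  ∑ S ∈ Finset.powersetCard r (Finset.univ : Finset (Fin n)),
    ∏ k : Fin S.card,
      bkt (z ((S.orderIsoOfFin rfl k : Fin n)))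
        (t ^ (((S.orderIsoOfFin rfl k : Fin n) : ℕ) - (k : ℕ)) * t0)

/-- `⟨z;t_0⟩_{q,k} := ∏_{i=0}^{k−1} ⟨z; q^i t_0⟩` (with `⟨z;t_0⟩_{q,0} := 1`). -/
def bktPoch {K : Type*} [Field K] (z t0 q : K) (k : ℕ) : K :=
  ∏ i ∈ Finset.range k, bkt z (q ^ i * t0)

/-! Induction on `m`. Removing the last variable `w` gives the Pascal-type recursion
`E_{r+1}(x) = E_{r+1}(x') + ⟨w; t^{m-r} t_0⟩ E_r(x')`, while the new factor `⟨w; z⟩` is absorbed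
term by term through `⟨w; z⟩ = ⟨w; t^k t_0⟩ - ⟨z; t^k t_0⟩` and
`⟨z; t_0⟩_{t,k} ⟨z; t^k t_0⟩ = ⟨z; t_0⟩_{t,k+1}`. Indexing the sum by `(r, k)` with `r + k = m`
turns both index shifts into the two standard decompositions of the antidiagonal. -/

theorem Finset.prod_orderEmbOfFin_eq_prod_card_filter_lt {α M : Type*} [LinearOrder α]
    [CommMonoid M] (S : Finset α) (f : α → ℕ → M) :
    ∏ k : Fin S.card, f (S.orderEmbOfFin rfl k) k = ∏ a ∈ S, f a #{b ∈ S | b < a} := by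
  set e := S.orderEmbOfFin rfl
  have hS : univ.map e.toEmbedding = S := S.map_orderEmbOfFin_univ rfl
  have hrank (k : Fin S.card) : #{b ∈ S | b < e k} = k := by
    calc #{b ∈ S | b < e k} = #{b ∈ univ.map e.toEmbedding | b < e k} := by rw [hS]
      _ = #(Iio k) := by rw [filter_map, card_map]; congr 1; ext; simp
      _ = k := Fin.card_Iio k
  calc ∏ k, f (e k) k = ∏ k, f (e k) #{b ∈ S | b < e k} := by simp only [hrank]
    _ = ∏ a ∈ univ.map e.toEmbedding, f a #{b ∈ S | b < a} := by rw [prod_map]; rfl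
    _ = ∏ a ∈ S, f a #{b ∈ S | b < a} := by rw [hS]

theorem Finset.card_filter_lt_map {α β : Type*} [LinearOrder α] [LinearOrder β] (f : α ↪ β)
    (hf : StrictMono f) (S : Finset α) (a : α) :
    #{b ∈ S.map f | b < f a} = #{b ∈ S | b < a} := by
  simp only [filter_map, card_map, Function.comp_def, hf.lt_iff_lt]

section ColumnRowCauchy

variable {K : Type*} [Field K]

theorem bkt_sub_bkt (a b c : K) : bkt a c - bkt b c = bkt a b := by
  simp only [bkt]; ring

/-- The `k`-th smallest element `j` of `S` (counting from `0`) is the one with `k` elements of `S`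
below it, so this is the summand of `Epoly` indexed by `S`. -/
def EpolyTerm {n : ℕ} (x : Fin n → K) (t t0 : K) (S : Finset (Fin n)) : K :=
  ∏ j ∈ S, bkt (x j) (t ^ ((j : ℕ) - #{i ∈ S | i < j}) * t0)

theorem Epoly_eq_sum_EpolyTerm {n : ℕ} (r : ℕ) (x : Fin n → K) (t t0 : K) :
    Epoly r x t t0 = ∑ S ∈ powersetCard r univ, EpolyTerm x t t0 S := by
  simp only [Epoly, coe_orderIsoOfFin_apply]
  exact sum_congr rfl fun S _ =>
    S.prod_orderEmbOfFin_eq_prod_card_filter_lt fun j k => bkt (x j) (t ^ ((j : ℕ) - k) * t0)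

@[simp]
theorem Epoly_zero {n : ℕ} (x : Fin n → K) (t t0 : K) : Epoly 0 x t t0 = 1 := by
  simp [Epoly_eq_sum_EpolyTerm, EpolyTerm]

theorem Epoly_eq_zero_of_lt {n r : ℕ} (h : n < r) (x : Fin n → K) (t t0 : K) :
    Epoly r x t t0 = 0 := by
  rw [Epoly_eq_sum_EpolyTerm, powersetCard_eq_empty.2 (by simpa using h), sum_empty]

theorem EpolyTerm_map_castSucc {n : ℕ} (x : Fin (n + 1) → K) (t t0 : K) (T : Finset (Fin n)) :
    EpolyTerm x t t0 (T.map Fin.castSuccEmb) = EpolyTerm (Fin.init x) t t0 T := by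
  simp only [EpolyTerm, prod_map]
  refine prod_congr rfl fun j _ => ?_
  rw [card_filter_lt_map _ Fin.strictMono_castSucc]
  rfl

theorem EpolyTerm_insert_last {n : ℕ} (x : Fin (n + 1) → K) (t t0 : K) (T : Finset (Fin n)) :
    EpolyTerm x t t0 (insert (Fin.last n) (T.map Fin.castSuccEmb)) =
      bkt (x (Fin.last n)) (t ^ (n - #T) * t0) * EpolyTerm (Fin.init x) t t0 T := by
  have hlast : Fin.last n ∉ T.map Fin.castSuccEmb := by simp [Fin.castSucc_ne_last]
  have hlt : ∀ j ∈ T.map Fin.castSuccEmb, j < Fin.last n := by simp [Fin.castSucc_lt_last]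
  rw [EpolyTerm, prod_insert hlast, ← EpolyTerm_map_castSucc, EpolyTerm, filter_insert,
    if_neg (lt_irrefl _), filter_true_of_mem hlt, card_map, Fin.val_last]
  congr 1
  refine prod_congr rfl fun j _ => ?_
  rw [filter_insert, if_neg (Fin.le_last j).not_gt]

theorem Epoly_succ {n : ℕ} (r : ℕ) (x : Fin (n + 1) → K) (t t0 : K) :
    Epoly (r + 1) x t t0 = Epoly (r + 1) (Fin.init x) t t0
      + bkt (x (Fin.last n)) (t ^ (n - r) * t0) * Epoly r (Fin.init x) t t0 := by
  have hlast : Fin.last n ∉ univ.map Fin.castSuccEmb := by simp [Fin.castSucc_ne_last]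
  simp only [Epoly_eq_sum_EpolyTerm]
  rw [Fin.univ_castSuccEmb, cons_eq_insert, powersetCard_succ_insert hlast, sum_union, sum_image]
  · simp only [powersetCard_map, sum_map, RelEmbedding.coe_toEmbedding, mapEmbedding_apply,
      mul_sum]
    congr 1 <;> refine sum_congr rfl fun T hT => ?_
    · exact EpolyTerm_map_castSucc x t t0 T
    · rw [EpolyTerm_insert_last, mem_powersetCard_univ.1 hT]
  · intro S hS S' hS' h
    have hSl : Fin.last n ∉ S := fun h => hlast ((mem_powersetCard.1 hS).1 h)
    have hSl' : Fin.last n ∉ S' := fun h => hlast ((mem_powersetCard.1 hS').1 h)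
    simpa [erase_insert hSl, erase_insert hSl'] using congrArg (·.erase (Fin.last n)) h
  · refine disjoint_left.2 fun S hS hS' => hlast ((mem_powersetCard.1 hS).1 ?_)
    obtain ⟨T, -, rfl⟩ := mem_image.1 hS'
    exact mem_insert_self _ _

theorem bktPoch_succ (z t0 q : K) (k : ℕ) :
    bktPoch z t0 q (k + 1) = bktPoch z t0 q k * bkt z (q ^ k * t0) :=
  prod_range_succ _ k

theorem prod_bkt_eq_sum_antidiagonal (z t t0 : K) {m : ℕ} (x : Fin m → K) :
    ∏ i, bkt (x i) z =
      ∑ p ∈ antidiagonal m, (-1 : K) ^ p.2 * Epoly p.1 x t t0 * bktPoch z t0 t p.2 := by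
  induction m with
  | zero => simp [bktPoch]
  | succ m ih =>
    set y := Fin.init x
    set w := x (Fin.last m)
    set g : ℕ × ℕ → K := fun p => (-1 : K) ^ p.2 * Epoly p.1 y t t0 * bktPoch z t0 t p.2
    have hshift : ∑ p ∈ antidiagonal m, g (p.1 + 1, p.2) =
        ∑ p ∈ antidiagonal m, g (p.1, p.2 + 1) - g (0, m + 1) := by
      have hg : g (m + 1, 0) = 0 := by simp [g, Epoly_eq_zero_of_lt (Nat.lt_succ_self m)]
      have h := (Nat.sum_antidiagonal_succ (n := m) (f := g)).symm.trans Nat.sum_antidiagonal_succ'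
      rw [hg, zero_add] at h
      exact eq_sub_of_add_eq' h
    set c : ℕ × ℕ → K := fun p =>
      (-1 : K) ^ p.2 * bkt w (t ^ p.2 * t0) * Epoly p.1 y t t0 * bktPoch z t0 t p.2
    calc ∏ i, bkt (x i) z = (∑ p ∈ antidiagonal m, g p) * bkt w z := by
          rw [Fin.prod_univ_castSucc, ih]; rfl
      _ = ∑ p ∈ antidiagonal m, (g (p.1, p.2 + 1) + c p) := by
          rw [sum_mul]
          refine sum_congr rfl fun p _ => ?_
          simp only [g, c, bktPoch_succ, pow_succ, ← bkt_sub_bkt w z (t ^ p.2 * t0)]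
          ring
      _ = g (0, m + 1) + ∑ p ∈ antidiagonal m, (g (p.1 + 1, p.2) + c p) := by
          rw [sum_add_distrib, sum_add_distrib, hshift]; ring
      _ = _ := by
          rw [Nat.sum_antidiagonal_succ]
          congr 1
          · simp [g]
          refine sum_congr rfl fun p hp => ?_
          obtain rfl : m = p.1 + p.2 := (mem_antidiagonal.1 hp).symm
          simp only [g, c, Epoly_succ, Nat.add_sub_cancel_left]
          ring

end ColumnRowCauchy

theorem statement14_general {K : Type*} [Field K] (m : ℕ) (x : Fin m → K) (z t t0 : K) :
    ∏ i, bkt (x i) z =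
      ∑ r ∈ Finset.range (m + 1),
        (-1 : K) ^ (m - r) * Epoly r x t t0 * bktPoch z t0 t (m - r) := by
  rw [prod_bkt_eq_sum_antidiagonal z t t0 x, Nat.sum_antidiagonal_eq_sum_range_succ_mk]

/-- column-row Cauchy identity:
`∏_{i=1}^m ⟨x_i; z⟩ = Σ_{r=0}^m (−1)^{m−r} E_r(x_1,…,x_m;t,t_0) ⟨z;t_0⟩_{t,m−r}`. -/
theorem statement14 {K : Type*} [Field K] (m : ℕ) (x : Fin m → K) (z t t0 : K)
    (hx : ∀ i, x i ≠ 0) (hz : z ≠ 0) (ht : t ≠ 0) (ht0 : t0 ≠ 0)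
    (htt0 : ∀ i < m, t ^ i * t0 ≠ 0) :
    ∏ i, bkt (x i) z =
      ∑ r ∈ Finset.range (m + 1),
        (-1 : K) ^ (m - r) * Epoly r x t t0 * bktPoch z t0 t (m - r) :=
  statement14_general m x z t t0
end

section
/- Let K be a field, let t, t_0 ∈ K be nonzero with t^i t_0 nonzero for all i ≥ 0, and let m ≥ 1, n ≥ 0. Suppose given: (a) functions A_λ : (K^×)^m → K for each λ ∈ Λ_m with λ ⊂ (n+1)^m; (b) for each N ∈ {n, n+1}, functions B^{(N)}_μ : (K^×)^N → K for each μ ∈ Λ_N with μ ⊂ m^N; (c) scalars c(μ, λ, r) ∈ K for μ ⊂ n^m, λ ⊂ (n+1)^m in Λ_m and integers 0 ≤ r ≤ m with λ ∼_r μ. Assume the following hypotheses for all nonzero arguments: (H1) [Cauchy formula] for N ∈ {n, n+1}: ∏_{1≤i≤m, 1≤j≤N} ⟨x_i; z_j⟩ = Σ_{λ ∈ Λ_m, λ ⊂ N^m} (−1)^{mN − |λ|} A_λ(x_1,…,x_m) B^{(N)}_{m^N − λ′}(z_1,…,z_N); (H2) [column-row Cauchy formula] ∏_{i=1}^{m}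 ⟨x_i; z⟩ = Σ_{r=0}^{m} (−1)^{m−r} E_r(x_1,…,x_m; t, t_0) ⟨z; t_0⟩_{t, m−r}; (H3) [Pieri formula] for every μ ∈ Λ_m with μ ⊂ n^m and 0 ≤ r ≤ m: E_r(x_1,…,x_m; t, t_0) A_μ(x_1,…,x_m) = Σ_{λ ⊂ (n+1)^m, λ ∼_r μ} c(μ, λ, r) A_λ(x_1,…,x_m); (H4) the functions A_λ, λ ⊂ (n+1)^m, are linearly independent over K as functions on (K^×)^m. Then for every λ ∈ Λ_m with λ ⊂ (n+1)^m and all nonzero z_1,…,z_n, z ∈ K: B^{(n+1)}_{m^{n+1} − λ′}(z_1,…,z_n,z) = Σ_{μ ⊂ n^m} Σ_{0 ≤ r ≤ m with μ ∼_r λ} (−1)^{r + |λ| − |μ|} c(μ, λ, r) B^{(n)}_{m^n − μ′}(z_1,…,z_n) ⟨z; t_0⟩_{t, m−r}. -/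
open Finset

instance {N : ℕ} : DecidablePred (IsPartition (N := N)) := fun l => by
  unfold IsPartition; infer_instance

/-- The (finite) set of partitions in `Λ_m` contained in the rectangle `N^m`,
i.e. partitions with at most `m` parts, all of size at most `N`. -/
def partitionsIn (m N : ℕ) : Finset (Fin m → ℕ) :=
  ((Finset.univ : Finset (Fin m → Fin (N + 1))).image
    (fun f j => ((f j : ℕ)))).filter IsPartition

/-!
Evaluated at `(z, zz)`, the Cauchy kernel in `n + 1` variables is the kernel in `n` variables
times `∏ᵢ ⟨xᵢ; zz⟩`. Expanding the first factor by (H1) for `N = n`, the second by the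
column-row formula (H2), and multiplying out with the Pieri rule (H3) writes the kernel as a
combination of the `A_λ`, `λ ⊂ (n+1)^m`. Comparing with (H1) for `N = n + 1` by linear
independence (H4) identifies `(-1)^(m(n+1) - |λ|) B^{(n+1)}_{m^{n+1} - λ′}` with the coefficient
of `A_λ`, which is the claimed sum up to that sign.
-/

lemma le_of_mem_partitionsIn {m N : ℕ} {l : Fin m → ℕ} (h : l ∈ partitionsIn m N) (j : Fin m) :
    l j ≤ N := by
  obtain ⟨⟨f, -, rfl⟩, -⟩ := Finset.mem_filter.mp h |>.imp_left Finset.mem_image.mp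
  exact Nat.lt_succ_iff.mp (f j).isLt

lemma wt_le_of_mem_partitionsIn {m N : ℕ} {l : Fin m → ℕ} (h : l ∈ partitionsIn m N) :
    wt l ≤ m * N := by
  calc wt l ≤ ∑ _j : Fin m, N := Finset.sum_le_sum fun j _ => le_of_mem_partitionsIn h j
    _ = m * N := by simp

lemma neg_one_zpow_eq_pow_of_even_sub {K : Type*} [DivisionRing K] {a : ℤ} {b : ℕ}
    (h : Even (a - b)) : (-1 : K) ^ a = (-1 : K) ^ b := by
  calc (-1 : K) ^ a = (-1 : K) ^ (a - b) * (-1 : K) ^ (b : ℤ) := by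
        rw [← zpow_add₀ (neg_ne_zero.mpr one_ne_zero), sub_add_cancel]
    _ = (-1 : K) ^ b := by rw [h.neg_one_zpow, one_mul, zpow_natCast]

lemma neg_one_pow_mul_pow_mul_pow_eq_zpow {K : Type*} [DivisionRing K] {q m r a b : ℕ}
    (hr : r ≤ m) (ha : a ≤ q + m) (hb : b ≤ q) :
    (-1 : K) ^ (q + m - a) * (-1 : K) ^ (q - b) * (-1 : K) ^ (m - r) =
      (-1 : K) ^ ((r : ℤ) + (a : ℤ) - (b : ℤ)) := by
  rw [← pow_add, ← pow_add, eq_comm]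
  exact neg_one_zpow_eq_pow_of_even_sub ⟨(r : ℤ) + a - q - m, by push_cast [Nat.cast_sub, *]; omega⟩

lemma prod_prod_snoc {α β M : Type*} [CommMonoid M] {m n : ℕ} (f : α → β → M)
    (x : Fin m → α) (z : Fin n → β) (w : β) :
    ∏ i, ∏ j, f (x i) ((Fin.snoc z w : Fin (n + 1) → β) j) =
      (∏ i, ∏ j, f (x i) (z j)) * ∏ i, f (x i) w := by
  rw [← Finset.prod_mul_distrib]
  exact Finset.prod_congr rfl fun i _ => by simp [Fin.prod_univ_castSucc]

lemma sum_mul_sum_eq_sum_of_pieri {ι κ R : Type*} [CommSemiring R] {s : Finset ι}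
    {T : Finset ℕ} {P : Finset κ} (rel : ℕ → ι → κ → Prop) [∀ r μ l, Decidable (rel r μ l)]
    (a : ι → R) (b : κ → R) (e : ℕ → R) (c : ι → κ → ℕ → R)
    (hPieri : ∀ μ ∈ s, ∀ r ∈ T, e r * a μ = ∑ l ∈ P.filter (fun l => rel r μ l), c μ l r * b l)
    (u : ι → R) (v : ℕ → R) :
    (∑ μ ∈ s, u μ * a μ) * (∑ r ∈ T, v r * e r) =
      ∑ l ∈ P, (∑ μ ∈ s, ∑ r ∈ T.filter (fun r => rel r μ l), u μ * v r * c μ l r) * b l := by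
  calc (∑ μ ∈ s, u μ * a μ) * (∑ r ∈ T, v r * e r)
      = ∑ μ ∈ s, ∑ r ∈ T, u μ * v r * (e r * a μ) := by
        rw [Finset.sum_mul_sum]
        exact Finset.sum_congr rfl fun μ _ => Finset.sum_congr rfl fun r _ => by ring
    _ = ∑ μ ∈ s, ∑ l ∈ P, ∑ r ∈ T.filter (fun r => rel r μ l), u μ * v r * (c μ l r * b l) := by
        refine Finset.sum_congr rfl fun μ hμ => ?_
        calc ∑ r ∈ T, u μ * v r * (e r * a μ)
            = ∑ r ∈ T, ∑ l ∈ P.filter (fun l => rel r μ l), u μ * v r * (c μ l r * b l) :=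
              Finset.sum_congr rfl fun r hr => by rw [hPieri μ hμ r hr, Finset.mul_sum]
          _ = _ := Finset.sum_comm' fun r l => by simp only [Finset.mem_filter]; tauto
    _ = ∑ l ∈ P, (∑ μ ∈ s, ∑ r ∈ T.filter (fun r => rel r μ l), u μ * v r * c μ l r) * b l := by
        rw [Finset.sum_comm]
        simp only [Finset.sum_mul, mul_assoc]

lemma eq_of_linearIndependent_of_sum_mul_eq {ι X K : Type*} [CommRing K] {s : Finset ι}
    {f : ι → X → K} (hf : LinearIndependent K fun i : s => f i) {a b : ι → K}
    (h : ∀ x, ∑ i ∈ s, a i * f i x = ∑ i ∈ s, b i * f i x) {i : ι} (hi : i ∈ s) :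
    a i = b i := by
  have hzero := Fintype.linearIndependent_iff.mp hf (fun j => a j - b j) <| by
    funext x
    simp only [Finset.sum_apply, Pi.smul_apply, smul_eq_mul, Pi.zero_apply]
    rw [Finset.sum_coe_sort s fun j => (a j - b j) * f j x]
    simp only [sub_mul, Finset.sum_sub_distrib, h x, sub_self]
  exact sub_eq_zero.mp (hzero ⟨i, hi⟩)

open scoped Classical in
theorem statement16_general {K : Type*} [Field K] (t t0 : K) (m n : ℕ)
    (A : (Fin m → ℕ) → (Fin m → K) → K)
    (Bn : (Fin n → ℕ) → (Fin n → K) → K)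
    (Bn1 : (Fin (n + 1) → ℕ) → (Fin (n + 1) → K) → K)
    (c : (Fin m → ℕ) → (Fin m → ℕ) → ℕ → K)
    -- (H1) Cauchy formula in `N = n` variables
    (hCauchyN : ∀ (x : Fin m → K), (∀ i, x i ≠ 0) →
      ∀ (z : Fin n → K), (∀ j, z j ≠ 0) →
        (∏ i, ∏ j, bkt (x i) (z j)) =
          ∑ l ∈ partitionsIn m n,
            (-1 : K) ^ (m * n - wt l) * A l x * Bn (complP m (conjP n l)) z)
    -- (H1) Cauchy formula in `N = n+1` variables
    (hCauchyN1 : ∀ (x : Fin m → K), (∀ i, x i ≠ 0) →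
      ∀ (z : Fin (n + 1) → K), (∀ j, z j ≠ 0) →
        (∏ i, ∏ j, bkt (x i) (z j)) =
          ∑ l ∈ partitionsIn m (n + 1),
            (-1 : K) ^ (m * (n + 1) - wt l) * A l x * Bn1 (complP m (conjP (n + 1) l)) z)
    -- (H2) column-row Cauchy formula
    (hColRow : ∀ (x : Fin m → K), (∀ i, x i ≠ 0) → ∀ z : K, z ≠ 0 →
      (∏ i, bkt (x i) z) =
        ∑ r ∈ Finset.range (m + 1),
          (-1 : K) ^ (m - r) * Epoly r x t t0 * bktPoch z t0 t (m - r))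
    -- (H3) Pieri formula
    (hPieri : ∀ μ ∈ partitionsIn m n, ∀ r ≤ m, ∀ (x : Fin m → K), (∀ i, x i ≠ 0) →
      Epoly r x t t0 * A μ x =
        ∑ l ∈ (partitionsIn m (n + 1)).filter (fun l => simRel r μ l),
          c μ l r * A l x)
    -- (H4) linear independence of the `A_λ` as functions on `(K^×)^m`
    (hLI : LinearIndependent K
      (fun (l : partitionsIn m (n + 1)) (x : Fin m → Kˣ) =>
        A (l : Fin m → ℕ) (fun i => (x i : K)))) :
    ∀ l ∈ partitionsIn m (n + 1), ∀ (z : Fin n → K), (∀ j, z j ≠ 0) →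
      ∀ zz : K, zz ≠ 0 →
        Bn1 (complP m (conjP (n + 1) l)) (Fin.snoc z zz) =
          ∑ μ ∈ partitionsIn m n,
            ∑ r ∈ (Finset.range (m + 1)).filter (fun r => simRel r μ l),
              (-1 : K) ^ ((r : ℤ) + (wt l : ℤ) - (wt μ : ℤ)) * c μ l r *
                Bn (complP m (conjP n μ)) z * bktPoch zz t0 t (m - r) := by
  intro l hl z hz zz hzz
  set u : (Fin m → ℕ) → K := fun μ => (-1 : K) ^ (m * n - wt μ) * Bn (complP m (conjP n μ)) z
  set v : ℕ → K := fun r => (-1 : K) ^ (m - r) * bktPoch zz t0 t (m - r)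
  set a : (Fin m → ℕ) → K := fun l =>
    (-1 : K) ^ (m * (n + 1) - wt l) * Bn1 (complP m (conjP (n + 1) l)) (Fin.snoc z zz)
  set b : (Fin m → ℕ) → K := fun l => ∑ μ ∈ partitionsIn m n,
    ∑ r ∈ (Finset.range (m + 1)).filter (fun r => simRel r μ l), u μ * v r * c μ l r
  have hsnoc : ∀ j, (Fin.snoc z zz : Fin (n + 1) → K) j ≠ 0 :=
    Fin.lastCases (by simpa using hzz) fun j => by simpa using hz j
  have hexpand : ∀ x : Fin m → Kˣ, ∑ l ∈ partitionsIn m (n + 1), a l * A l (fun i => x i) =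
      ∑ l ∈ partitionsIn m (n + 1), b l * A l (fun i => x i) := by
    intro x
    have hx : ∀ i, (x i : K) ≠ 0 := fun i => (x i).ne_zero
    rw [← sum_mul_sum_eq_sum_of_pieri simRel _ _ _ c
      (fun μ hμ r hr => hPieri μ hμ r (Nat.lt_succ_iff.mp (Finset.mem_range.mp hr)) _ hx)]
    calc _ = ∏ i, ∏ j, bkt (x i : K) ((Fin.snoc z zz : Fin (n + 1) → K) j) := by
          rw [hCauchyN1 _ hx _ hsnoc]
          exact Finset.sum_congr rfl fun l _ => by ring
      _ = (∏ i, ∏ j, bkt (x i : K) (z j)) * ∏ i, bkt (x i : K) zz := prod_prod_snoc _ _ _ _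
      _ = _ := by
          rw [hCauchyN _ hx z hz, hColRow _ hx zz hzz]
          congr 1 <;> exact Finset.sum_congr rfl fun _ _ => by simp only [u, v]; ring
  have hcoeff : a l = b l := eq_of_linearIndependent_of_sum_mul_eq
    (f := fun (l : Fin m → ℕ) (x : Fin m → Kˣ) => A l fun i => (x i : K)) hLI hexpand hl
  calc Bn1 (complP m (conjP (n + 1) l)) (Fin.snoc z zz)
      = (-1 : K) ^ (m * (n + 1) - wt l) * a l := by
        rw [← mul_assoc, ← mul_pow, neg_one_mul, neg_neg, one_pow, one_mul]
    _ = (-1 : K) ^ (m * n + m - wt l) * b l := by rw [hcoeff, mul_add_one]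
    _ = _ := by
        simp only [b, Finset.mul_sum]
        refine Finset.sum_congr rfl fun μ hμ => Finset.sum_congr rfl fun r hr => ?_
        have hrm : r ≤ m := Nat.lt_succ_iff.mp (Finset.mem_range.mp (Finset.mem_filter.mp hr).1)
        rw [← neg_one_pow_mul_pow_mul_pow_eq_zpow (q := m * n) hrm (wt_le_of_mem_partitionsIn hl)
          (wt_le_of_mem_partitionsIn hμ)]
        ring

open scoped Classical in
/-- abstract derivation of the branching rule. Given families
`A_λ` (`λ ∈ Λ_m`, `λ ⊂ (n+1)^m`), `B^{(n)}_μ`, `B^{(n+1)}_μ` and Pieri coefficients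
`c(μ,λ,r)` satisfying: (H1) the Cauchy formulas in `N = n` and `N = n+1` variables,
(H2) the column-row Cauchy formula, (H3) the Pieri formula, and (H4) linear
independence of the `A_λ` as functions on `(K^×)^m`, it follows that for every
`λ ⊂ (n+1)^m` and nonzero `z_1,…,z_n,z`:
`B^{(n+1)}_{m^{n+1}−λ′}(z_1,…,z_n,z) = Σ_{μ ⊂ n^m} Σ_{0 ≤ r ≤ m, μ ∼_r λ}
(−1)^{r+|λ|−|μ|} c(μ,λ,r) B^{(n)}_{m^n−μ′}(z_1,…,z_n) ⟨z;t_0⟩_{t,m−r}`. -/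
theorem statement16 {K : Type*} [Field K] (t t0 : K) (ht : t ≠ 0) (ht0 : t0 ≠ 0)
    (htt0 : ∀ i : ℕ, t ^ i * t0 ≠ 0) (m n : ℕ) (hm : 1 ≤ m)
    (A : (Fin m → ℕ) → (Fin m → K) → K)
    (Bn : (Fin n → ℕ) → (Fin n → K) → K)
    (Bn1 : (Fin (n + 1) → ℕ) → (Fin (n + 1) → K) → K)
    (c : (Fin m → ℕ) → (Fin m → ℕ) → ℕ → K)
    -- (H1) Cauchy formula in `N = n` variables
    (hCauchyN : ∀ (x : Fin m → K), (∀ i, x i ≠ 0) →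
      ∀ (z : Fin n → K), (∀ j, z j ≠ 0) →
        (∏ i, ∏ j, bkt (x i) (z j)) =
          ∑ l ∈ partitionsIn m n,
            (-1 : K) ^ (m * n - wt l) * A l x * Bn (complP m (conjP n l)) z)
    -- (H1) Cauchy formula in `N = n+1` variables
    (hCauchyN1 : ∀ (x : Fin m → K), (∀ i, x i ≠ 0) →
      ∀ (z : Fin (n + 1) → K), (∀ j, z j ≠ 0) →
        (∏ i, ∏ j, bkt (x i) (z j)) =
          ∑ l ∈ partitionsIn m (n + 1),
            (-1 : K) ^ (m * (n + 1) - wt l) * A l x * Bn1 (complP m (conjP (n + 1) l)) z)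
    -- (H2) column-row Cauchy formula
    (hColRow : ∀ (x : Fin m → K), (∀ i, x i ≠ 0) → ∀ z : K, z ≠ 0 →
      (∏ i, bkt (x i) z) =
        ∑ r ∈ Finset.range (m + 1),
          (-1 : K) ^ (m - r) * Epoly r x t t0 * bktPoch z t0 t (m - r))
    -- (H3) Pieri formula
    (hPieri : ∀ μ ∈ partitionsIn m n, ∀ r ≤ m, ∀ (x : Fin m → K), (∀ i, x i ≠ 0) →
      Epoly r x t t0 * A μ x =
        ∑ l ∈ (partitionsIn m (n + 1)).filter (fun l => simRel r μ l),
          c μ l r * A l x)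
    -- (H4) linear independence of the `A_λ` as functions on `(K^×)^m`
    (hLI : LinearIndependent K
      (fun (l : partitionsIn m (n + 1)) (x : Fin m → Kˣ) =>
        A (l : Fin m → ℕ) (fun i => (x i : K)))) :
    ∀ l ∈ partitionsIn m (n + 1), ∀ (z : Fin n → K), (∀ j, z j ≠ 0) →
      ∀ zz : K, zz ≠ 0 →
        Bn1 (complP m (conjP (n + 1) l)) (Fin.snoc z zz) =
          ∑ μ ∈ partitionsIn m n,
            ∑ r ∈ (Finset.range (m + 1)).filter (fun r => simRel r μ l),
              (-1 : K) ^ ((r : ℤ) + (wt l : ℤ) - (wt μ : ℤ)) * c μ l r *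
                Bn (complP m (conjP n μ)) z * bktPoch zz t0 t (m - r) :=
  statement16_general t t0 m n A Bn Bn1 c hCauchyN hCauchyN1 hColRow hPieri hLI
end
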